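/- arXiv:1003.1453 — 4 statements merged into one kernel-verified Lean document; each statement's English description precedes it below -/
import Mathlib

section
/- Let r₁ > 0 and δ ∈ (−π/2, 0). Set f₁ = i·tan(δ/2) and Ω_h = i f₁(1 + f₁²)/(2r₁(1 − f₁²)), and define the Kerr spectral functions F(k) = (2Ω_h²(k²−r₁²) + 2iΩ_h f₁ k − f₁²)/(2Ω_h²(k²−r₁²)) and G(k) = (2iΩ_h r₁ − f₁)f₁²/(2Ω_h²(k²−r₁²)). Let f(ρ,ζ) = (R₊e^{−iδ} + R₋e^{iδ} − 2r₁)/(R₊e^{−iδ} + R₋e^{iδ} + 2r₁) with R₊ = √((r₁−ζ)²+ρ²), R₋ = √((−r₁−ζ)²+ρ²). Then Ω_h is a nonzero real number, and for every real ζ > r₁ one has Re f(0,ζ) ≠ 0, F(ζ) · Re f(0,ζ) = 1, and G(ζ) · Re f(0,ζ) = i · Im f(0,ζ). -/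
open Real Complex

/-- `R₊(ρ,ζ) = √((r₁−ζ)² + ρ²)`. -/
noncomputable def Rplus (r₁ ρ ζ : ℝ) : ℝ := Real.sqrt ((r₁ - ζ) ^ 2 + ρ ^ 2)

/-- `R₋(ρ,ζ) = √((−r₁−ζ)² + ρ²)`. -/
noncomputable def Rminus (r₁ ρ ζ : ℝ) : ℝ := Real.sqrt ((-r₁ - ζ) ^ 2 + ρ ^ 2)

/-- The Kerr Ernst potential
`f(ρ,ζ) = (R₊e^{−iδ} + R₋e^{iδ} − 2r₁)/(R₊e^{−iδ} + R₋e^{iδ} + 2r₁)`. -/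
noncomputable def kerrF (r₁ δ ρ ζ : ℝ) : ℂ :=
  ((Rplus r₁ ρ ζ : ℂ) * Complex.exp (-Complex.I * δ) +
    (Rminus r₁ ρ ζ : ℂ) * Complex.exp (Complex.I * δ) - 2 * r₁) /
  ((Rplus r₁ ρ ζ : ℂ) * Complex.exp (-Complex.I * δ) +
    (Rminus r₁ ρ ζ : ℂ) * Complex.exp (Complex.I * δ) + 2 * r₁)

private lemma cdiv_helper (a b c d : ℝ) (h : c^2 + d^2 ≠ 0) :
    ((a:ℂ) + (b:ℂ)*Complex.I) / ((c:ℂ) + (d:ℂ)*Complex.I)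
      = (((a*c+b*d)/(c^2+d^2) : ℝ):ℂ) + (((b*c-a*d)/(c^2+d^2) : ℝ):ℂ) * Complex.I := by
  have hcd : ((c:ℂ) + (d:ℂ)*Complex.I) ≠ 0 := by
    intro hh
    have h1 := congrArg Complex.re hh
    have h2 := congrArg Complex.im hh
    simp at h1 h2
    exact h (by rw [h1, h2]; ring)
  have hE : ((c:ℂ)^2 + (d:ℂ)^2) ≠ 0 := by
    intro hh
    exact h (by exact_mod_cast hh)
  rw [div_eq_iff hcd]
  push_cast
  field_simp
  linear_combination ((a*(d:ℂ) - b*(c:ℂ))*(d:ℂ)) * Complex.I_sq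

set_option maxHeartbeats 1000000 in
/-- The Kerr spectral functions `F` and `G` satisfy `F(ζ) = 1/Re f(iζ)` and
`G(ζ) = i·Im f(iζ)/Re f(iζ)` on the regular axis `ζ > r₁`, and the horizon angular
velocity `Ω_h = i f₁(1+f₁²)/(2r₁(1−f₁²))` (with `f₁ = i·tan(δ/2)`) is a nonzero real
number. -/
theorem kerr_spectral_functions_axis (r₁ δ : ℝ) (hr₁ : 0 < r₁)
    (hδ : δ ∈ Set.Ioo (-(Real.pi / 2)) 0) :
    let f₁ : ℂ := Complex.I * (Real.tan (δ / 2) : ℂ)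
    let Ωh : ℂ := Complex.I * f₁ * (1 + f₁ ^ 2) / (2 * (r₁ : ℂ) * (1 - f₁ ^ 2))
    let F : ℂ → ℂ := fun k =>
      (2 * Ωh ^ 2 * (k ^ 2 - (r₁ : ℂ) ^ 2) + 2 * Complex.I * Ωh * f₁ * k - f₁ ^ 2) /
        (2 * Ωh ^ 2 * (k ^ 2 - (r₁ : ℂ) ^ 2))
    let G : ℂ → ℂ := fun k =>
      (2 * Complex.I * Ωh * (r₁ : ℂ) - f₁) * f₁ ^ 2 /
        (2 * Ωh ^ 2 * (k ^ 2 - (r₁ : ℂ) ^ 2))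
    Ωh.im = 0 ∧ Ωh ≠ 0 ∧
      ∀ ζ : ℝ, r₁ < ζ →
        (kerrF r₁ δ 0 ζ).re ≠ 0 ∧
        F (ζ : ℂ) * ((kerrF r₁ δ 0 ζ).re : ℂ) = 1 ∧
        G (ζ : ℂ) * ((kerrF r₁ δ 0 ζ).re : ℂ) =
          Complex.I * ((kerrF r₁ δ 0 ζ).im : ℂ) := by
  obtain ⟨hδ1, hδ2⟩ := hδ
  have hπ := Real.pi_pos
  intro f₁ Ωh F G
  set t : ℝ := Real.tan (δ / 2) with ht
  -- basic facts about t = tan(δ/2)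
  have hc : 0 < Real.cos (δ / 2) := Real.cos_pos_of_mem_Ioo ⟨by linarith, by linarith⟩
  have hs : Real.sin (δ / 2) < 0 := Real.sin_neg_of_neg_of_neg_pi_lt (by linarith) (by linarith)
  have ht0 : t < 0 := by
    rw [ht, Real.tan_eq_sin_div_cos]; exact div_neg_of_neg_of_pos hs hc
  have htm1 : -1 < t := by
    have := Real.tan_lt_tan_of_lt_of_lt_pi_div_two (x := -(Real.pi/4)) (y := δ/2)
      (by linarith) (by linarith) (by linarith)
    rwa [Real.tan_neg, Real.tan_pi_div_four] at this
  have h1t : 0 < 1 - t^2 := by nlinarith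
  have h1t' : (0:ℝ) < 1 + t^2 := by positivity
  -- half-angle formulas
  have hpyth := Real.sin_sq_add_cos_sq (δ/2)
  have hcd : Real.cos δ = (1 - t^2) / (1 + t^2) := by
    have h2 : Real.cos δ = 2 * Real.cos (δ/2)^2 - 1 := by
      have := Real.cos_two_mul (δ/2)
      rw [show 2 * (δ/2) = δ by ring] at this
      exact this
    rw [h2, ht, Real.tan_eq_sin_div_cos]
    field_simp
    nlinarith [hpyth]
  have hsd : Real.sin δ = 2 * t / (1 + t^2) := by
    have h2 : Real.sin δ = 2 * Real.sin (δ/2) * Real.cos (δ/2) := by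
      have := Real.sin_two_mul (δ/2)
      rw [show 2 * (δ/2) = δ by ring] at this
      exact this
    rw [h2, ht, Real.tan_eq_sin_div_cos]
    field_simp
    nlinarith [hpyth]
  -- Ωh is the real number w
  set w : ℝ := -t * (1 - t^2) / (2 * r₁ * (1 + t^2)) with hw
  have hwpos : 0 < w := div_pos (by nlinarith) (by positivity)
  have hf₁sq : f₁ ^ 2 = -((t:ℂ)^2) := by
    simp only [f₁, mul_pow, Complex.I_sq]; ring
  have hf₁' : f₁ = Complex.I * (t:ℂ) := rfl
  have hΩ : Ωh = (w : ℂ) := by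
    have hden : (2 * (r₁:ℂ) * (1 - f₁^2)) ≠ 0 := by
      rw [hf₁sq]
      intro h
      have : (2 * r₁ * (1 - -t^2) : ℝ) = 0 := by exact_mod_cast h
      nlinarith
    rw [show Ωh = Complex.I * f₁ * (1 + f₁ ^ 2) / (2 * (r₁ : ℂ) * (1 - f₁ ^ 2)) from rfl,
      div_eq_iff hden, hf₁sq, hf₁',
      show Complex.I * (Complex.I * (t:ℂ)) = -(t:ℂ) by
        rw [← mul_assoc, Complex.I_mul_I]; ring]
    have hw' : ((w:ℝ):ℂ) * ((2 * r₁ * (1 + t^2) : ℝ):ℂ) = ((-t * (1 - t^2) : ℝ):ℂ) := by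
      rw [← Complex.ofReal_mul]
      norm_cast
      rw [hw]
      field_simp
    push_cast at hw' ⊢
    linear_combination -hw'
  refine ⟨by rw [hΩ]; simp, by rw [hΩ]; exact_mod_cast hwpos.ne', ?_⟩
  intro ζ hζ
  have hζ0 : 0 < ζ := lt_trans hr₁ hζ
  -- axis values of R±
  have hRp : Rplus r₁ 0 ζ = ζ - r₁ := by
    rw [Rplus, show (r₁ - ζ)^2 + (0:ℝ)^2 = (ζ - r₁)^2 by ring]
    exact Real.sqrt_sq (by linarith)
  have hRm : Rminus r₁ 0 ζ = ζ + r₁ := by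
    rw [Rminus, show (-r₁ - ζ)^2 + (0:ℝ)^2 = (ζ + r₁)^2 by ring]
    exact Real.sqrt_sq (by linarith)
  have hexp1 : Complex.exp (-Complex.I * (δ:ℂ))
      = ((Real.cos δ : ℝ):ℂ) - ((Real.sin δ : ℝ):ℂ) * Complex.I := by
    rw [show -Complex.I * (δ:ℂ) = ((-δ:ℝ):ℂ) * Complex.I by push_cast; ring,
      Complex.exp_mul_I, ← Complex.ofReal_cos, ← Complex.ofReal_sin,
      Real.cos_neg, Real.sin_neg]
    push_cast
    ring
  have hexp2 : Complex.exp (Complex.I * (δ:ℂ))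
      = ((Real.cos δ : ℝ):ℂ) + ((Real.sin δ : ℝ):ℂ) * Complex.I := by
    rw [show Complex.I * (δ:ℂ) = ((δ:ℝ):ℂ) * Complex.I by ring,
      Complex.exp_mul_I, ← Complex.ofReal_cos, ← Complex.ofReal_sin]
  set cd : ℝ := Real.cos δ with hcd'
  set sd : ℝ := Real.sin δ with hsd'
  have hcdpos : 0 < cd := Real.cos_pos_of_mem_Ioo ⟨by linarith, by linarith⟩
  set D : ℝ := (ζ * cd + r₁)^2 + (r₁ * sd)^2 with hD'
  have hDpos : 0 < D := by
    have h0 : 0 < ζ * cd + r₁ := by positivity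
    positivity
  set X : ℝ := ((ζ*cd)^2 + (r₁*sd)^2 - r₁^2) / D with hX
  set Y : ℝ := 2 * r₁ * (r₁ * sd) / D with hY
  -- the Ernst potential on the axis
  have e1 : ((ζ - r₁ : ℝ):ℂ) * (((cd:ℝ):ℂ) - ((sd:ℝ):ℂ)*Complex.I) +
      ((ζ + r₁ : ℝ):ℂ) * (((cd:ℝ):ℂ) + ((sd:ℝ):ℂ)*Complex.I) - 2*(r₁:ℂ)
      = ((2*(ζ*cd - r₁) : ℝ):ℂ) + ((2*(r₁*sd) : ℝ):ℂ) * Complex.I := by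
    push_cast; ring
  have e2 : ((ζ - r₁ : ℝ):ℂ) * (((cd:ℝ):ℂ) - ((sd:ℝ):ℂ)*Complex.I) +
      ((ζ + r₁ : ℝ):ℂ) * (((cd:ℝ):ℂ) + ((sd:ℝ):ℂ)*Complex.I) + 2*(r₁:ℂ)
      = ((2*(ζ*cd + r₁) : ℝ):ℂ) + ((2*(r₁*sd) : ℝ):ℂ) * Complex.I := by
    push_cast; ring
  have h4D : (2*(ζ*cd + r₁))^2 + (2*(r₁*sd))^2 ≠ 0 := by
    have : (2*(ζ*cd + r₁))^2 + (2*(r₁*sd))^2 = 4 * D := by rw [hD']; ring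
    rw [this]; positivity
  have key : kerrF r₁ δ 0 ζ = (X:ℂ) + (Y:ℂ) * Complex.I := by
    rw [kerrF, hRp, hRm, hexp1, hexp2, e1, e2, cdiv_helper _ _ _ _ h4D]
    have hx2 : (2*(ζ*cd - r₁)*(2*(ζ*cd + r₁)) + 2*(r₁*sd)*(2*(r₁*sd)))
        / ((2*(ζ*cd + r₁))^2 + (2*(r₁*sd))^2) = X := by
      rw [hX, show (2*(ζ*cd + r₁))^2 + (2*(r₁*sd))^2 = 4 * D by rw [hD']; ring]
      rw [div_eq_div_iff (by positivity) hDpos.ne']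
      ring
    have hy2 : (2*(r₁*sd)*(2*(ζ*cd + r₁)) - 2*(ζ*cd - r₁)*(2*(r₁*sd)))
        / ((2*(ζ*cd + r₁))^2 + (2*(r₁*sd))^2) = Y := by
      rw [hY, show (2*(ζ*cd + r₁))^2 + (2*(r₁*sd))^2 = 4 * D by rw [hD']; ring]
      rw [div_eq_div_iff (by positivity) hDpos.ne']
      ring
    rw [hx2, hy2]
  have hre : (kerrF r₁ δ 0 ζ).re = X := by rw [key]; simp
  have him : (kerrF r₁ δ 0 ζ).im = Y := by rw [key]; simp
  have hXpos : 0 < X := by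
    rw [hX]
    apply div_pos _ hDpos
    have h1 : sd^2 = 1 - cd^2 := by
      have := Real.sin_sq_add_cos_sq δ
      rw [← hsd', ← hcd'] at this
      linarith
    have h2 : (ζ*cd)^2 + (r₁*sd)^2 - r₁^2 = cd^2*(ζ^2 - r₁^2) := by
      linear_combination (r₁^2) * h1
    rw [h2]
    have h3 : 0 < ζ^2 - r₁^2 := by rw [sub_pos, sq, sq]; exact mul_self_lt_mul_self hr₁.le hζ
    exact mul_pos (pow_pos hcdpos 2) h3
  have hdenF : 2 * Ωh^2 * ((ζ:ℂ)^2 - (r₁:ℂ)^2) ≠ 0 := by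
    rw [hΩ]
    intro h
    have h2 : (2 * w^2 * (ζ^2 - r₁^2) : ℝ) = 0 := by exact_mod_cast h
    have h3 : 0 < ζ^2 - r₁^2 := by rw [sub_pos, sq, sq]; exact mul_self_lt_mul_self hr₁.le hζ
    have h4 : 0 < 2 * w^2 * (ζ^2 - r₁^2) := by positivity
    linarith
  have hsum : (1 + t^2 : ℝ) ≠ 0 := by positivity
  rw [hre, him]
  refine ⟨hXpos.ne', ?_, ?_⟩
  · -- F
    have idF : (2*w^2*(ζ^2 - r₁^2) - 2*w*t*ζ + t^2) * X = 2*w^2*(ζ^2 - r₁^2) := by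
      rw [hX, hD', hcd, hsd, hw]
      field_simp
      ring
    have idF' : (2*(w:ℂ)^2*((ζ:ℂ)^2 - (r₁:ℂ)^2) - 2*(w:ℂ)*(t:ℂ)*(ζ:ℂ) + (t:ℂ)^2) * (X:ℂ)
        = 2*(w:ℂ)^2*((ζ:ℂ)^2 - (r₁:ℂ)^2) := by exact_mod_cast idF
    show (2 * Ωh ^ 2 * ((ζ:ℂ) ^ 2 - (r₁ : ℂ) ^ 2) + 2 * Complex.I * Ωh * f₁ * ζ - f₁ ^ 2) /
        (2 * Ωh ^ 2 * ((ζ:ℂ) ^ 2 - (r₁ : ℂ) ^ 2)) * (X:ℂ) = 1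
    rw [div_mul_eq_mul_div, div_eq_iff hdenF, hΩ, hf₁sq, hf₁',
      show 2 * Complex.I * ((w:ℝ):ℂ) * (Complex.I * (t:ℂ)) * (ζ:ℂ)
        = 2 * (w:ℂ) * (t:ℂ) * (ζ:ℂ) * (Complex.I * Complex.I) by ring, Complex.I_mul_I]
    linear_combination idF'
  · -- G
    have idG : -((2*w*r₁ - t) * t^2) * X = 2*w^2*(ζ^2 - r₁^2) * Y := by
      rw [hX, hY, hD', hcd, hsd, hw]
      field_simp
      ring
    have idG' : (-((2*(w:ℂ)*(r₁:ℂ) - (t:ℂ)) * (t:ℂ)^2)) * (X:ℂ)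
        = 2*(w:ℂ)^2*((ζ:ℂ)^2 - (r₁:ℂ)^2) * (Y:ℂ) := by exact_mod_cast idG
    show (2 * Complex.I * Ωh * (r₁ : ℂ) - f₁) * f₁ ^ 2 /
        (2 * Ωh ^ 2 * ((ζ:ℂ) ^ 2 - (r₁ : ℂ) ^ 2)) * (X:ℂ) = Complex.I * (Y:ℂ)
    rw [div_mul_eq_mul_div, div_eq_iff hdenF, hΩ, hf₁sq, hf₁']
    linear_combination Complex.I * idG'
end

section
/- Let D be an open subset of {(ρ,ζ) ∈ ℝ² : ρ > 0} and let f : D → ℂ be twice continuously differentiable with Re f ≠ 0 on D, satisfying the Ernst equation Re f · (∂²f/∂ρ² + ∂²f/∂ζ² + (1/ρ)∂f/∂ρ) = (∂f/∂ρ)² + (∂f/∂ζ)² on D. Write b = Im f. Then on D one has the divergence identity ∂/∂ρ ( ρ (Re f)^{−2} ∂b/∂ρ ) + ∂/∂ζ ( ρ (Re f)^{−2} ∂b/∂ζ ) = 0; equivalently, the vector field (a_ρ, a_ζ) := (ρ (Re f)^{−2} ∂b/∂ζ, −ρ (Re f)^{−2} ∂b/∂ρ) is curl-free, so that the metric function a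 with a_ρ = ρ e^{−4U} b_ζ and a_ζ = −ρ e^{−4U} b_ρ exists locally. -/
open Real Complex

private lemma slice_fst {G : ℝ × ℝ → ℂ} {q : ℝ × ℝ} (hG : DifferentiableAt ℝ G q) :
    HasDerivAt (fun x => G (x, q.2)) (fderiv ℝ G q (1, 0)) q.1 := by
  have h : HasDerivAt (fun x : ℝ => (x, q.2)) ((1 : ℝ), (0 : ℝ)) q.1 :=
    HasDerivAt.prodMk (hasDerivAt_id q.1) (hasDerivAt_const q.1 q.2)
  exact HasFDerivAt.comp_hasDerivAt q.1 hG.hasFDerivAt h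

private lemma slice_snd {G : ℝ × ℝ → ℂ} {q : ℝ × ℝ} (hG : DifferentiableAt ℝ G q) :
    HasDerivAt (fun y => G (q.1, y)) (fderiv ℝ G q (0, 1)) q.2 := by
  have h : HasDerivAt (fun y : ℝ => (q.1, y)) ((0 : ℝ), (1 : ℝ)) q.2 :=
    HasDerivAt.prodMk (hasDerivAt_const q.2 q.1) (hasDerivAt_id q.2)
  exact HasFDerivAt.comp_hasDerivAt q.2 hG.hasFDerivAt h


/-- For a `C²` solution `f` of the Ernst equation with `Re f ≠ 0` on an open set
`D ⊆ {ρ > 0}`, writing `b = Im f`, the divergence identity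
`∂_ρ(ρ (Re f)⁻² b_ρ) + ∂_ζ(ρ (Re f)⁻² b_ζ) = 0` holds on `D`; this is the local
integrability condition for the metric function `a` defined by
`a_ρ = ρ e^{−4U} b_ζ`, `a_ζ = −ρ e^{−4U} b_ρ`. -/
theorem ernst_divergence_identity (D : Set (ℝ × ℝ)) (hD : IsOpen D)
    (hDpos : ∀ p ∈ D, 0 < p.1) (f : ℝ → ℝ → ℂ)
    (hf : ContDiffOn ℝ 2 (fun p : ℝ × ℝ => f p.1 p.2) D)
    (hre : ∀ p ∈ D, (f p.1 p.2).re ≠ 0)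
    (hernst : ∀ p ∈ D,
      ((f p.1 p.2).re : ℂ) *
          (deriv (fun x => deriv (fun x' => f x' p.2) x) p.1 +
            deriv (fun y => deriv (fun y' => f p.1 y') y) p.2 +
            (1 / (p.1 : ℂ)) * deriv (fun x => f x p.2) p.1) =
        (deriv (fun x => f x p.2) p.1) ^ 2 + (deriv (fun y => f p.1 y) p.2) ^ 2) :
    ∀ p ∈ D,
      deriv (fun x => x * (((f x p.2).re) ^ 2)⁻¹ *
          deriv (fun x' => (f x' p.2).im) x) p.1 +
        deriv (fun y => p.1 * (((f p.1 y).re) ^ 2)⁻¹ *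
          deriv (fun y' => (f p.1 y').im) y) p.2 = 0 := by
  intro p hp
  set F : ℝ × ℝ → ℂ := fun q => f q.1 q.2 with hFdef
  have hFd : ∀ q ∈ D, DifferentiableAt ℝ F q := fun q hq =>
    ((hf.contDiffAt (hD.mem_nhds hq)).differentiableAt (by norm_num))
  set f₁ : ℝ × ℝ → ℂ := fun q => fderiv ℝ F q (1, 0) with hf1def
  set f₂ : ℝ × ℝ → ℂ := fun q => fderiv ℝ F q (0, 1) with hf2def
  have hfderiv : ContDiffOn ℝ 1 (fderiv ℝ F) D := hf.fderiv_of_isOpen hD (by norm_num)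
  have hf1c : ContDiffOn ℝ 1 f₁ D :=
    (ContinuousLinearMap.apply ℝ ℂ ((1 : ℝ), (0 : ℝ))).contDiff.comp_contDiffOn hfderiv
  have hf2c : ContDiffOn ℝ 1 f₂ D :=
    (ContinuousLinearMap.apply ℝ ℂ ((0 : ℝ), (1 : ℝ))).contDiff.comp_contDiffOn hfderiv
  have hf1d : DifferentiableAt ℝ f₁ p :=
    (hf1c.contDiffAt (hD.mem_nhds hp)).differentiableAt one_ne_zero
  have hf2d : DifferentiableAt ℝ f₂ p :=
    (hf2c.contDiffAt (hD.mem_nhds hp)).differentiableAt one_ne_zero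
  -- first partial derivatives
  have key1 : ∀ q ∈ D, HasDerivAt (fun x => f x q.2) (f₁ q) q.1 := fun q hq =>
    slice_fst (hFd q hq)
  have key2 : ∀ q ∈ D, HasDerivAt (fun y => f q.1 y) (f₂ q) q.2 := fun q hq =>
    slice_snd (hFd q hq)
  -- membership neighborhoods
  have hnx : {x : ℝ | (x, p.2) ∈ D} ∈ nhds p.1 := by
    have : IsOpen {x : ℝ | (x, p.2) ∈ D} :=
      hD.preimage (by fun_prop : Continuous fun x : ℝ => (x, p.2))
    exact this.mem_nhds (by simpa using hp)
  have hny : {y : ℝ | (p.1, y) ∈ D} ∈ nhds p.2 := by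
    have : IsOpen {y : ℝ | (p.1, y) ∈ D} :=
      hD.preimage (by fun_prop : Continuous fun y : ℝ => (p.1, y))
    exact this.mem_nhds (by simpa using hp)
  -- second partial derivatives
  have key11 : deriv (fun x => deriv (fun x' => f x' p.2) x) p.1 = fderiv ℝ f₁ p (1, 0) := by
    have heq : (fun x => deriv (fun x' => f x' p.2) x) =ᶠ[nhds p.1]
        (fun x => f₁ (x, p.2)) := by
      filter_upwards [hnx] with x hx
      exact (key1 (x, p.2) hx).deriv
    rw [heq.deriv_eq]
    exact (slice_fst (q := p) hf1d).deriv
  have key22 : deriv (fun y => deriv (fun y' => f p.1 y') y) p.2 = fderiv ℝ f₂ p (0, 1) := by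
    have heq : (fun y => deriv (fun y' => f p.1 y') y) =ᶠ[nhds p.2]
        (fun y => f₂ (p.1, y)) := by
      filter_upwards [hny] with y hy
      exact (key2 (p.1, y) hy).deriv
    rw [heq.deriv_eq]
    exact (slice_snd (q := p) hf2d).deriv
  -- notation
  set u : ℝ := (f p.1 p.2).re with hu
  set ρ : ℝ := p.1 with hρ
  set a₁ : ℝ := (f₁ p).re
  set b₁ : ℝ := (f₁ p).im
  set a₂ : ℝ := (f₂ p).re
  set b₂ : ℝ := (f₂ p).im
  set b₁₁ : ℝ := (fderiv ℝ f₁ p (1, 0)).im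
  set b₂₂ : ℝ := (fderiv ℝ f₂ p (0, 1)).im
  have hune : u ≠ 0 := hre p hp
  have hρne : ρ ≠ 0 := (hDpos p hp).ne'
  -- Ernst equation, imaginary part
  have E := hernst p hp
  rw [key11, key22, (key1 p hp).deriv, (key2 p hp).deriv] at E
  have hcast : (1 / (p.1 : ℂ)) = ((ρ⁻¹ : ℝ) : ℂ) := by rw [hρ]; push_cast; ring
  rw [hcast] at E
  have EIm := congrArg Complex.im E
  simp only [Complex.mul_im, Complex.add_im, Complex.add_re, Complex.ofReal_re,
    Complex.ofReal_im, pow_two, Complex.mul_re, zero_mul, mul_zero, add_zero, zero_add] at EIm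
  -- EIm : u * (b₁₁ + b₂₂ + (ρ⁻¹ * b₁)) = ... (to inspect)
  -- derivative of the ρ-part
  have hud : HasDerivAt (fun x => (f x p.2).re) a₁ p.1 :=
    Complex.reCLM.hasFDerivAt.comp_hasDerivAt p.1 (key1 p hp)
  have hv : HasDerivAt (fun x => (((f x p.2).re) ^ 2)⁻¹)
      (-(2 * u ^ 1 * a₁) / (u ^ 2) ^ 2) p.1 :=
    (hud.pow 2).inv (pow_ne_zero _ hune)
  have hw : HasDerivAt (fun x => (f₁ (x, p.2)).im) b₁₁ p.1 :=
    Complex.imCLM.hasFDerivAt.comp_hasDerivAt p.1 (slice_fst (q := p) hf1d)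
  have hg1 : HasDerivAt (fun x => x * (((f x p.2).re) ^ 2)⁻¹ * (f₁ (x, p.2)).im)
      ((1 * (u ^ 2)⁻¹ + p.1 * (-(2 * u ^ 1 * a₁) / (u ^ 2) ^ 2)) * b₁
        + p.1 * (u ^ 2)⁻¹ * b₁₁) p.1 :=
    ((hasDerivAt_id p.1).mul hv).mul hw
  have heq1 : (fun x => x * (((f x p.2).re) ^ 2)⁻¹ * deriv (fun x' => (f x' p.2).im) x)
      =ᶠ[nhds p.1] (fun x => x * (((f x p.2).re) ^ 2)⁻¹ * (f₁ (x, p.2)).im) := by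
    filter_upwards [hnx] with x hx
    congr 1
    exact (Complex.imCLM.hasFDerivAt.comp_hasDerivAt x (key1 (x, p.2) hx)).deriv
  have d1 : deriv (fun x => x * (((f x p.2).re) ^ 2)⁻¹ *
      deriv (fun x' => (f x' p.2).im) x) p.1
      = (1 * (u ^ 2)⁻¹ + p.1 * (-(2 * u ^ 1 * a₁) / (u ^ 2) ^ 2)) * b₁
        + p.1 * (u ^ 2)⁻¹ * b₁₁ := by
    rw [heq1.deriv_eq]; exact hg1.deriv
  -- derivative of the ζ-part
  have hud2 : HasDerivAt (fun y => (f p.1 y).re) a₂ p.2 :=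
    Complex.reCLM.hasFDerivAt.comp_hasDerivAt p.2 (key2 p hp)
  have hv2 : HasDerivAt (fun y => (((f p.1 y).re) ^ 2)⁻¹)
      (-(2 * u ^ 1 * a₂) / (u ^ 2) ^ 2) p.2 :=
    (hud2.pow 2).inv (pow_ne_zero _ hune)
  have hw2 : HasDerivAt (fun y => (f₂ (p.1, y)).im) b₂₂ p.2 :=
    Complex.imCLM.hasFDerivAt.comp_hasDerivAt p.2 (slice_snd (q := p) hf2d)
  have hg2 : HasDerivAt (fun y => p.1 * (((f p.1 y).re) ^ 2)⁻¹ * (f₂ (p.1, y)).im)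
      ((0 * (u ^ 2)⁻¹ + p.1 * (-(2 * u ^ 1 * a₂) / (u ^ 2) ^ 2)) * b₂
        + p.1 * (u ^ 2)⁻¹ * b₂₂) p.2 :=
    ((hasDerivAt_const p.2 p.1).mul hv2).mul hw2
  have heq2 : (fun y => p.1 * (((f p.1 y).re) ^ 2)⁻¹ * deriv (fun y' => (f p.1 y').im) y)
      =ᶠ[nhds p.2] (fun y => p.1 * (((f p.1 y).re) ^ 2)⁻¹ * (f₂ (p.1, y)).im) := by
    filter_upwards [hny] with y hy
    congr 1
    exact (Complex.imCLM.hasFDerivAt.comp_hasDerivAt y (key2 (p.1, y) hy)).deriv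
  have d2 : deriv (fun y => p.1 * (((f p.1 y).re) ^ 2)⁻¹ *
      deriv (fun y' => (f p.1 y').im) y) p.2
      = (0 * (u ^ 2)⁻¹ + p.1 * (-(2 * u ^ 1 * a₂) / (u ^ 2) ^ 2)) * b₂
        + p.1 * (u ^ 2)⁻¹ * b₂₂ := by
    rw [heq2.deriv_eq]; exact hg2.deriv
  rw [d1, d2]
  have key : u * (b₁₁ + b₂₂ + ρ⁻¹ * b₁) = 2 * (a₁ * b₁ + a₂ * b₂) := by
    rw [hu, hρ]
    linear_combination EIm
  have expand : (1 * (u ^ 2)⁻¹ + p.1 * (-(2 * u ^ 1 * a₁) / (u ^ 2) ^ 2)) * b₁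
        + p.1 * (u ^ 2)⁻¹ * b₁₁
      + ((0 * (u ^ 2)⁻¹ + p.1 * (-(2 * u ^ 1 * a₂) / (u ^ 2) ^ 2)) * b₂
        + p.1 * (u ^ 2)⁻¹ * b₂₂)
      = (ρ / u ^ 3) * (u * (b₁₁ + b₂₂ + ρ⁻¹ * b₁) - 2 * (a₁ * b₁ + a₂ * b₂)) := by
    rw [hρ]
    have hp1 : p.1 ≠ 0 := hρne
    field_simp
    ring
  rw [expand, key, sub_self, mul_zero]
end

section
/- Let Q, L, L' be 2×2 complex matrices and w ∈ ℂ, and suppose tr Q = 0, tr L = 0, tr(Q·L) = 0, det Q = −(1+w²), and (Q + wI)·L = −L'·(Q + wI). Then, writing L̂₂₂ = L₂₁Q₁₁ + L₂₂Q₂₁ and L̂'₂₂ = L'₂₁Q₁₁ + L'₂₂Q₂₁ for the indicated matrix entries, one has L'₂₁ = −2w·L̂₂₂ + (1+2w²)·L₂₁ and L̂'₂₂ = (1+2w²)·L̂₂₂ − 2w(1+w²)·L₂₁. -/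
/-- Jump relations of the scalar Riemann–Hilbert problem: if `tr Q = 0`, `tr L = 0`,
`tr(Q·L) = 0`, `det Q = −(1+w²)` and `(Q + wI)·L = −L'·(Q + wI)`, then, writing
`L̂₂₂ = L₂₁Q₁₁ + L₂₂Q₂₁` and `L̂'₂₂ = L'₂₁Q₁₁ + L'₂₂Q₂₁`, one has
`L'₂₁ = −2w L̂₂₂ + (1+2w²) L₂₁` and `L̂'₂₂ = (1+2w²) L̂₂₂ − 2w(1+w²) L₂₁`. -/
theorem jump_relations (Q L L' : Matrix (Fin 2) (Fin 2) ℂ) (w : ℂ)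
    (hQ : Q.trace = 0) (hL : L.trace = 0) (hQL : (Q * L).trace = 0)
    (hdetQ : Q.det = -(1 + w ^ 2))
    (hjump : (Q + w • (1 : Matrix (Fin 2) (Fin 2) ℂ)) * L =
      -(L' * (Q + w • (1 : Matrix (Fin 2) (Fin 2) ℂ)))) :
    L' 1 0 = -2 * w * (L 1 0 * Q 0 0 + L 1 1 * Q 1 0) + (1 + 2 * w ^ 2) * L 1 0 ∧
    L' 1 0 * Q 0 0 + L' 1 1 * Q 1 0 =
      (1 + 2 * w ^ 2) * (L 1 0 * Q 0 0 + L 1 1 * Q 1 0) -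
        2 * w * (1 + w ^ 2) * L 1 0 := by
  have hA := congrFun (congrFun hjump 1) 0
  have hB := congrFun (congrFun hjump 1) 1
  simp [Matrix.mul_apply, Fin.sum_univ_two, Matrix.add_apply, Matrix.smul_apply,
    Matrix.one_apply, Matrix.neg_apply] at hA hB
  rw [Matrix.trace_fin_two] at hQ hL
  simp [Matrix.trace_fin_two, Matrix.mul_apply, Fin.sum_univ_two] at hQL
  rw [Matrix.det_fin_two] at hdetQ
  have hd : Q 1 1 = -Q 0 0 := by linear_combination hQ
  have hs : L 1 1 = -L 0 0 := by linear_combination hL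
  simp only [hd, hs] at hA hB hQL hdetQ
  constructor
  · linear_combination (Q 0 0 - w) * hA + Q 1 0 * hB +
      (L' 1 0 - L 1 0) * hdetQ - Q 1 0 * hQL + 2 * w * Q 1 0 * hL
  · linear_combination (Q 0 0 ^ 2 - Q 0 0 * w + Q 0 1 * Q 1 0) * hA - Q 1 0 * w * hB +
      (Q 0 0 * L' 1 0 + Q 1 0 * L' 1 1 + 2 * L 1 0 * w + Q 1 0 * L 0 0 - Q 0 0 * L 1 0) * hdetQ +
      w * Q 1 0 * hQL - (1 + 2 * w ^ 2) * Q 1 0 * hL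
end

section
/- Let Ω_h be a nonzero real number, r₁ > 0, f₁ ∈ ℂ, and k ∈ ℂ with k ≠ r₁. Define the 2×2 matrix T₁(k) = (2(k−r₁)Ω_h)⁻¹·[[2(k−r₁)Ω_h − i f₁, i],[−i f₁², 2(k−r₁)Ω_h + i f₁]]. Then: (i) the row vector identities (f₁, −1)·T₁(k) = (f₁, −1) and (2iΩ_h(k−r₁), 0)·T₁(k) = (f₁ + 2iΩ_h(k−r₁), −1) hold; (ii) det T₁(k) = 1; (iii) T₁(k) is the unique 2×2 complex matrix satisfying the two row vector identities of (i). -/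
open Complex Matrix

/-- Characterization of the transition matrix `T₁(k)` of Proposition 4.1: it satisfies
the row-vector identities `(f₁, −1)·T₁ = (f₁, −1)` and
`(2iΩ_h(k−r₁), 0)·T₁ = (f₁ + 2iΩ_h(k−r₁), −1)`, has determinant `1`, and is the unique
`2×2` complex matrix satisfying the two row-vector identities. -/
theorem T1_characterization (r₁ Ωh : ℝ) (hr₁ : 0 < r₁) (hΩh : Ωh ≠ 0)
    (f₁ : ℂ) (k : ℂ) (hk : k ≠ (r₁ : ℂ)) :
    let T₁ : Matrix (Fin 2) (Fin 2) ℂ :=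
      (2 * (k - (r₁ : ℂ)) * (Ωh : ℂ))⁻¹ •
        !![2 * (k - (r₁ : ℂ)) * (Ωh : ℂ) - Complex.I * f₁, Complex.I;
           -Complex.I * f₁ ^ 2, 2 * (k - (r₁ : ℂ)) * (Ωh : ℂ) + Complex.I * f₁]
    Matrix.vecMul ![f₁, -1] T₁ = ![f₁, -1] ∧
    Matrix.vecMul ![2 * Complex.I * (Ωh : ℂ) * (k - (r₁ : ℂ)), 0] T₁ =
      ![f₁ + 2 * Complex.I * (Ωh : ℂ) * (k - (r₁ : ℂ)), -1] ∧
    T₁.det = 1 ∧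
    ∀ T : Matrix (Fin 2) (Fin 2) ℂ,
      Matrix.vecMul ![f₁, -1] T = ![f₁, -1] →
      Matrix.vecMul ![2 * Complex.I * (Ωh : ℂ) * (k - (r₁ : ℂ)), 0] T =
        ![f₁ + 2 * Complex.I * (Ωh : ℂ) * (k - (r₁ : ℂ)), -1] →
      T = T₁ := by
  intro T₁
  have hk' : k - (r₁ : ℂ) ≠ 0 := sub_ne_zero.mpr hk
  have hΩ : (Ωh : ℂ) ≠ 0 := by exact_mod_cast hΩh
  have hc : 2 * (k - (r₁ : ℂ)) * (Ωh : ℂ) ≠ 0 := by simp [hk', hΩ]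
  refine ⟨?_, ?_, ?_, ?_⟩
  · funext i
    fin_cases i <;>
      simp [T₁, Matrix.vecMul, dotProduct, Fin.sum_univ_two] <;>
      field_simp <;> ring
  · funext i
    fin_cases i <;>
      simp [T₁, Matrix.vecMul, dotProduct, Fin.sum_univ_two] <;> field_simp
    · linear_combination (-f₁) * Complex.I_sq
    · linear_combination Complex.I_sq
  · simp [T₁, Matrix.det_fin_two, Matrix.smul_apply]
    field_simp
    ring
  · intro T h1 h2
    have e10 := congrFun h1 0
    have e11 := congrFun h1 1
    have e20 := congrFun h2 0
    have e21 := congrFun h2 1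
    simp [Matrix.vecMul, dotProduct, Fin.sum_univ_two] at e10 e11 e20 e21
    have A00 : 2 * (k - (r₁:ℂ)) * (Ωh:ℂ) * T 0 0 = 2 * (k - (r₁:ℂ)) * (Ωh:ℂ) - Complex.I * f₁ := by
      linear_combination (-Complex.I) * e20 +
        (2*(Ωh:ℂ)*(k-(r₁:ℂ))*(T 0 0 - 1)) * Complex.I_sq
    have A01 : 2 * (k - (r₁:ℂ)) * (Ωh:ℂ) * T 0 1 = Complex.I := by
      linear_combination (-Complex.I) * e21 +
        (2*(Ωh:ℂ)*(k-(r₁:ℂ))*(T 0 1)) * Complex.I_sq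
    have A10 : 2 * (k - (r₁:ℂ)) * (Ωh:ℂ) * T 1 0 = -Complex.I * f₁ ^ 2 := by
      linear_combination f₁ * A00 - (2*(k-(r₁:ℂ))*(Ωh:ℂ)) * e10
    have A11 : 2 * (k - (r₁:ℂ)) * (Ωh:ℂ) * T 1 1 = 2 * (k - (r₁:ℂ)) * (Ωh:ℂ) + Complex.I * f₁ := by
      linear_combination f₁ * A01 - (2*(k-(r₁:ℂ))*(Ωh:ℂ)) * e11
    funext i j
    fin_cases i <;> fin_cases j <;>
      simp [T₁, Matrix.smul_apply] <;> field_simp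
    · linear_combination A00
    · linear_combination A01
    · linear_combination A10
    · linear_combination A11
end
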